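/- For q an odd prime power, gcd((q³−q)/4, 2(2q−1)) = 2·gcd(3, q+1); in particular every common divisor of (q³−q)/4 and 2(2q−1) divides 6. -/
import Mathlib


/-- For q an odd prime power, gcd((q³−q)/4, 2(2q−1)) = 2·gcd(3, q+1); in
particular every common divisor of (q³−q)/4 and 2(2q−1) divides 6. -/
theorem gcd_odd_prime_power (q : ℕ) (hq : IsPrimePow q) (hodd : Odd q) :
    Nat.gcd ((q ^ 3 - q) / 4) (2 * (2 * q - 1)) = 2 * Nat.gcd 3 (q + 1) ∧
    ∀ d : ℕ, d ∣ (q ^ 3 - q) / 4 → d ∣ 2 * (2 * q - 1) → d ∣ 6 := by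
  obtain ⟨m, rfl⟩ : ∃ m, q = 2 * m + 1 := by
    obtain ⟨m, hm⟩ := hodd; exact ⟨m, hm⟩
  -- Simplify the two quantities
  have hM : ((2 * m + 1) ^ 3 - (2 * m + 1)) / 4 = m * (m + 1) * (2 * m + 1) := by
    have h : (2 * m + 1) ^ 3 = (2 * m + 1) + 4 * (m * (m + 1) * (2 * m + 1)) := by ring
    rw [h, Nat.add_sub_cancel_left, Nat.mul_div_cancel_left _ (by norm_num)]
  have h2 : 2 * (2 * (2 * m + 1) - 1) = 2 * (4 * m + 1) := by omega
  -- coprimality facts against 4m+1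
  have cop2 : Nat.Coprime 2 (4 * m + 1) := by
    show Nat.gcd 2 (4 * m + 1) = 1
    have h : 4 * m + 1 = 1 + (2 * m) * 2 := by ring
    rw [h, Nat.gcd_add_mul_right_right, Nat.gcd_one_right]
  have copm : Nat.Coprime m (4 * m + 1) := by
    show Nat.gcd m (4 * m + 1) = 1
    have h : 4 * m + 1 = 1 + 4 * m := by ring
    rw [h, Nat.gcd_add_mul_right_right, Nat.gcd_one_right]
  have cop2m1 : Nat.Coprime (2 * m + 1) (4 * m + 1) := by
    show Nat.gcd (2 * m + 1) (4 * m + 1) = 1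
    have h : 4 * m + 1 = 2 * m + 1 * (2 * m + 1) := by ring
    rw [h, Nat.gcd_add_mul_right_right]
    rw [Nat.gcd_self_add_left, Nat.gcd_one_left]
  have cop4 : Nat.Coprime 4 (4 * m + 1) := by
    show Nat.gcd 4 (4 * m + 1) = 1
    have h : 4 * m + 1 = 1 + m * 4 := by ring
    rw [h, Nat.gcd_add_mul_right_right, Nat.gcd_one_right]
  -- the odd-part gcd computation
  have key : Nat.gcd (m * (m + 1) * (2 * m + 1)) (4 * m + 1) = Nat.gcd 3 (m + 1) := by
    rw [cop2m1.gcd_mul_right_cancel (m * (m + 1)),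
        copm.gcd_mul_left_cancel (m + 1),
        ← cop4.gcd_mul_left_cancel (m + 1)]
    have h : 4 * (m + 1) = 3 + (4 * m + 1) := by ring
    rw [h, Nat.gcd_add_self_left]
    have h' : 4 * m + 1 = (m + 1) + m * 3 := by ring
    rw [h', Nat.gcd_add_mul_right_right]
  -- extract the factor 2
  obtain ⟨N, hN⟩ : ∃ N, m * (m + 1) * (2 * m + 1) = 2 * N := by
    have h : Even (m * (m + 1) * (2 * m + 1)) :=
      (Nat.even_mul_succ_self m).mul_right _
    obtain ⟨k, hk⟩ := h; exact ⟨k, by omega⟩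
  have main : Nat.gcd (((2 * m + 1) ^ 3 - (2 * m + 1)) / 4) (2 * (2 * (2 * m + 1) - 1))
      = 2 * Nat.gcd 3 (2 * m + 1 + 1) := by
    rw [hM, h2, hN, Nat.gcd_mul_left]
    congr 1
    rw [← cop2.gcd_mul_left_cancel N, ← hN, key]
    have h : 2 * m + 1 + 1 = 2 * (m + 1) := by ring
    rw [h, (by decide : Nat.Coprime 2 3).gcd_mul_left_cancel_right (m + 1)]
  refine ⟨main, fun d hd1 hd2 => ?_⟩
  have hdvd := Nat.dvd_gcd hd1 hd2
  rw [main] at hdvd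
  exact hdvd.trans (by
    have := Nat.gcd_dvd_left 3 (2 * m + 1 + 1)
    exact (mul_dvd_mul_left 2 this).trans (by norm_num))
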